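/- Every regular function on SL₂(k) (k algebraically closed) that is invariant under left and right translation by U₂ is a polynomial in φ, where φ(a b; c d) = c. That is, k[SL₂]^{U₂×U₂} = k[φ]. -/

import Mathlib

/-- `U₂`: upper unitriangular matrices in `SL₂(k)`. -/
def IsUpperUni {k : Type*} [Field k] (u : Matrix.SpecialLinearGroup (Fin 2) k) : Prop :=
  u.val 0 0 = 1 ∧ u.val 1 0 = 0 ∧ u.val 1 1 = 1

/-!
If the lower-left entry `c` of `g` is nonzero, upper unipotent translations on both sides carry
`g` to `!![1, 0; c, 1]`, so a bi-invariant `ψ` takes the value `Q c` at `g`, where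
`Q t = ψ !![1, 0; t, 1]` is a polynomial. For arbitrary `g = !![a, b; c, d]`, the lower-left entry
of `g * !![1, 0; t, 1]` is `c + d t`, which vanishes for at most one `t` because `(c, d) ≠ 0`.
Hence the polynomials `t ↦ ψ (g * !![1, 0; t, 1])` and `t ↦ Q (c + d t)` agree at infinitely
many points, so they are equal, and `t = 0` gives `ψ g = Q c`.
-/

open Polynomial Matrix
open scoped MatrixGroups

lemma MvPolynomial.exists_eval_eq_polynomial_eval {R σ : Type*} [CommRing R]
    (P : MvPolynomial σ R) {γ : R → σ → R} (f : σ → R[X])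
    (hγ : ∀ t i, γ t i = (f i).eval t) :
    ∃ Q : R[X], ∀ t, MvPolynomial.eval (γ t) P = Q.eval t :=
  ⟨aeval f P, fun t => by
    rw [_root_.funext (hγ t), ← Polynomial.coe_aeval_eq_eval, comp_aeval_apply,
      ← coe_aeval_eq_eval]
    rfl⟩

namespace Matrix.SpecialLinearGroup

variable {k : Type*} [Field k]

def upperUnipotent (x : k) : SL(2, k) := ⟨!![1, x; 0, 1], by simp⟩

def lowerUnipotent (c : k) : SL(2, k) := ⟨!![1, 0; c, 1], by simp⟩

@[simp]
lemma coe_upperUnipotent (x : k) : (upperUnipotent x : Matrix (Fin 2) (Fin 2) k) = !![1, x; 0, 1] :=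
  rfl

@[simp]
lemma coe_lowerUnipotent (c : k) : (lowerUnipotent c : Matrix (Fin 2) (Fin 2) k) = !![1, 0; c, 1] :=
  rfl

@[simp]
lemma lowerUnipotent_zero : lowerUnipotent (0 : k) = 1 := by
  ext i j
  fin_cases i <;> fin_cases j <;> simp

lemma isUpperUni_upperUnipotent (x : k) : IsUpperUni (upperUnipotent x) := by
  simp [IsUpperUni]

lemma det_fin_two_eq_one (g : SL(2, k)) : g 0 0 * g 1 1 - g 0 1 * g 1 0 = 1 := by
  rw [← det_fin_two, g.det_coe]

lemma upperUnipotent_mul_mul_upperUnipotent (g : SL(2, k)) (hc : g 1 0 ≠ 0) :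
    upperUnipotent ((1 - g 0 0) / g 1 0) * g * upperUnipotent ((1 - g 1 1) / g 1 0) =
      lowerUnipotent (g 1 0) := by
  have hdet := det_fin_two_eq_one g
  ext i j
  fin_cases i <;> fin_cases j <;>
    simp [mul_apply, Fin.sum_univ_two, vecMul, dotProduct] <;>
    field_simp <;> first | ring1 | linear_combination -hdet

lemma mul_lowerUnipotent_apply_one_zero (g : SL(2, k)) (t : k) :
    (g * lowerUnipotent t) 1 0 = g 1 0 + g 1 1 * t := by
  simp [mul_apply, Fin.sum_univ_two]

lemma apply_eq_apply_lowerUnipotent {α : Type*} {ψ : SL(2, k) → α}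
    (hinv : ∀ u v g : SL(2, k), IsUpperUni u → IsUpperUni v → ψ (u * g * v) = ψ g)
    (g : SL(2, k)) (hc : g 1 0 ≠ 0) : ψ g = ψ (lowerUnipotent (g 1 0)) := by
  rw [← upperUnipotent_mul_mul_upperUnipotent g hc,
    hinv _ _ _ (isUpperUni_upperUnipotent _) (isUpperUni_upperUnipotent _)]

lemma exists_polynomial_comp_eq_eval {ψ : SL(2, k) → k}
    (hreg : ∃ P : MvPolynomial (Fin 2 × Fin 2) k, ∀ g : SL(2, k),
      ψ g = MvPolynomial.eval (fun ij => g.val ij.1 ij.2) P)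
    {γ : k → SL(2, k)} (M : Matrix (Fin 2) (Fin 2) k[X])
    (hγ : ∀ t, (γ t).val = M.map (eval t)) :
    ∃ Q : k[X], ∀ t, ψ (γ t) = Q.eval t := by
  obtain ⟨P, hP⟩ := hreg
  simp_rw [hP]
  exact P.exists_eval_eq_polynomial_eval (fun ij => M ij.1 ij.2) fun t ij => by simp [hγ]

lemma subsingleton_setOf_mul_lowerUnipotent_apply_one_zero_eq_zero (g : SL(2, k)) :
    {t : k | (g * lowerUnipotent t) 1 0 = 0}.Subsingleton := by
  intro s hs t ht
  simp only [Set.mem_ofPred_eq, mul_lowerUnipotent_apply_one_zero] at hs ht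
  have hdet := det_fin_two_eq_one g
  rcases mul_eq_zero.1 (show g 1 1 * (s - t) = 0 by linear_combination hs - ht) with h | h
  · have hc : g 1 0 = 0 := by simpa [h] using hs
    simp [h, hc] at hdet
  · exact sub_eq_zero.1 h

end Matrix.SpecialLinearGroup

open Matrix.SpecialLinearGroup in
/-- Every regular function on `SL₂(k)` (i.e. a function given by a polynomial in the
matrix entries) that is invariant under left and right translation by `U₂` is a
polynomial in `φ`, where `φ(a b; c d) = c`:  `k[SL₂]^{U₂×U₂} = k[φ]`. -/
theorem bi_invariant_regular_functions {k : Type*} [Field k] [IsAlgClosed k]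
    (ψ : Matrix.SpecialLinearGroup (Fin 2) k → k)
    (hreg : ∃ P : MvPolynomial (Fin 2 × Fin 2) k,
      ∀ g : Matrix.SpecialLinearGroup (Fin 2) k,
        ψ g = MvPolynomial.eval (fun ij => g.val ij.1 ij.2) P)
    (hinv : ∀ u v g : Matrix.SpecialLinearGroup (Fin 2) k,
      IsUpperUni u → IsUpperUni v → ψ (u * g * v) = ψ g) :
    ∃ Q : Polynomial k, ∀ g : Matrix.SpecialLinearGroup (Fin 2) k,
      ψ g = Q.eval (g.val 1 0) := by
  obtain ⟨Q, hQ⟩ : ∃ Q : k[X], ∀ c, ψ (lowerUnipotent c) = Q.eval c :=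
    exists_polynomial_comp_eq_eval hreg !![1, 0; X, 1] fun t => by
      ext i j; fin_cases i <;> fin_cases j <;> simp
  refine ⟨Q, fun g => ?_⟩
  obtain ⟨R, hR⟩ : ∃ R : k[X], ∀ t, ψ (g * lowerUnipotent t) = R.eval t :=
    exists_polynomial_comp_eq_eval hreg (g.val.map C * !![1, 0; X, 1]) fun t => by
      ext i j; fin_cases i <;> fin_cases j <;> simp [mul_apply, Fin.sum_univ_two]
  have hRQ : R = Q.comp (C (g 1 0) + C (g 1 1) * X) := by
    refine eq_of_infinite_eval_eq _ _ <|
      (subsingleton_setOf_mul_lowerUnipotent_apply_one_zero_eq_zero g).finite.infinite_compl.mono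
        fun t ht => ?_
    change R.eval t = _
    rw [← hR, apply_eq_apply_lowerUnipotent hinv _ ht, hQ,
      mul_lowerUnipotent_apply_one_zero]
    simp
  simpa [hRQ] using hR 0
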